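/- Fix λ ∈ (0,1) and let G be a geometric random variable with parameter λ. For ε ∈ (0,1/2) set q = 1/2 - ε and β(ε) := E[h((1-(1-2q)^G)/2)] = E[h((1-(2ε)^G)/2)]. Then β(ε) = 1 - 2·log₂e·λ·ε² + O(ε⁴) as ε → 0; that is, there exist C > 0 and ε₀ > 0 such that for all 0 < ε < ε₀, |β(ε) - 1 + 2·log₂e·λ·ε²| ≤ C·ε⁴. -/

import Mathlib

open Real Filter MeasureTheory

/-- Binary entropy function (base-2 logarithm), with `binEnt 0 = binEnt 1 = 0`. -/
noncomputable def binEnt (p : ℝ) : ℝ :=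
  -p * Real.logb 2 p - (1 - p) * Real.logb 2 (1 - p)

/-- Inverse of the binary entropy function, mapping `[0,1]` onto `[0,1/2]`. -/
noncomputable def binEntInv (y : ℝ) : ℝ :=
  sInf {p : ℝ | p ∈ Set.Icc (0:ℝ) (1/2) ∧ y ≤ binEnt p}

/-- Binary convolution `a*b := a(1-b) + b(1-a)`. -/
def bConv (a b : ℝ) : ℝ := a * (1 - b) + b * (1 - a)

/-- Shannon entropy (in bits) of a distribution on a finite type. -/
noncomputable def entropyDist {β : Type*} [Fintype β] (p : β → ℝ) : ℝ :=
  ∑ b, -(p b * Real.logb 2 (p b))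

/-- Probability of the path `x` under the stationary symmetric binary Markov process with
transition probability `q`: the first coordinate is uniform (`Bernoulli(1/2)`) and each
subsequent coordinate flips the previous one with probability `q`. -/
noncomputable def symPathProb (q : ℝ) (n : ℕ) (x : Fin n → Bool) : ℝ :=
  ∏ i : Fin n,
    if (i : ℕ) = 0 then (1/2 : ℝ)
    else if x ⟨(i : ℕ) - 1, Nat.lt_of_le_of_lt (Nat.sub_le _ _) i.isLt⟩ = x i then 1 - q else q

/-- Output distribution of a memoryless binary symmetric channel with crossover probability `a`
applied to an input with distribution `p` (each coordinate flipped independently w.p. `a`). -/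
noncomputable def bscOutput {n : ℕ} (a : ℝ) (p : (Fin n → Bool) → ℝ) : (Fin n → Bool) → ℝ :=
  fun y => ∑ x : Fin n → Bool, p x * ∏ i, (if y i = x i then 1 - a else a)

/-- Distribution of the projection onto the coordinates in `s` of a vector with distribution `p`. -/
noncomputable def projDist {n : ℕ} (p : (Fin n → Bool) → ℝ) (s : Finset (Fin n)) :
    ({ i // i ∈ s } → Bool) → ℝ :=
  fun y => ∑ x : Fin n → Bool, if (∀ i : { i // i ∈ s }, x i.val = y i) then p x else 0

/-- `H(X_S | S) = ∑_{s ⊆ [n]} P(S = s) H(X_s)`, where the random subset `S` contains each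
element of `[n]` independently with probability `lam`. -/
noncomputable def condEntProj {n : ℕ} (lam : ℝ) (p : (Fin n → Bool) → ℝ) : ℝ :=
  ∑ s : Finset (Fin n), lam ^ s.card * (1 - lam) ^ (n - s.card) * entropyDist (projDist p s)

/-- Transition kernel of a binary Markov chain: `P(b | a)` with off-diagonal entries
`q01 = P(1|0)` and `q10 = P(0|1)`. -/
def markovTrans (q01 q10 : ℝ) (a b : Bool) : ℝ :=
  if a then (if b then 1 - q10 else q10) else (if b then q01 else 1 - q01)

/-- Probability of the path `x` under the binary Markov chain with initial distribution
`(p0, p1)` and transition probabilities `q01, q10`. -/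
noncomputable def markovPathProb (p0 p1 q01 q10 : ℝ) (n : ℕ) (x : Fin n → Bool) : ℝ :=
  ∏ i : Fin n,
    if (i : ℕ) = 0 then (if x i then p1 else p0)
    else markovTrans q01 q10 (x ⟨(i : ℕ) - 1, Nat.lt_of_le_of_lt (Nat.sub_le _ _) i.isLt⟩) (x i)

/-!
With `x = 1 - 2q`, `h((1 - x)/2) = 1 - ((1 + x) log (1 + x) + (1 - x) log (1 - x)) / (2 log 2)`,
and the Taylor expansion of the logarithm gives `h((1 - x)/2) = 1 - x²/(2 log 2) + O(x⁴)`.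
Averaging over `x = (2ε)^G`, the generating function `E[z^G] = λz / (1 - (1 - λ)z)` of the
geometric law at `z = 4ε²` gives `E[x²] = 4λε² + O(ε⁴)`, and at `z = 16ε⁴` it bounds the averaged
remainder by `O(ε⁴)`.
-/

lemma mul_logb_div_two (y : ℝ) : y * logb 2 (y / 2) = y * logb 2 y - y := by
  rcases eq_or_ne y 0 with rfl | hy
  · simp
  · rw [logb_div hy two_ne_zero, logb_self_eq_one one_lt_two]
    ring

lemma binEnt_one_sub_div_two (x : ℝ) :
    binEnt ((1 - x) / 2) =
      1 - ((1 + x) * log (1 + x) + (1 - x) * log (1 - x)) / (2 * log 2) := by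
  have hlog2 : log 2 ≠ 0 := (log_pos one_lt_two).ne'
  calc binEnt ((1 - x) / 2)
      = -((1 - x) * logb 2 ((1 - x) / 2)) / 2 - (1 + x) * logb 2 ((1 + x) / 2) / 2 := by
        rw [binEnt, show 1 - (1 - x) / 2 = (1 + x) / 2 by ring]; ring
    _ = _ := by
        rw [mul_logb_div_two, mul_logb_div_two, logb, logb]
        field_simp
        ring

lemma abs_mul_log_one_add_add_mul_log_one_sub_sub_sq_le {x : ℝ} (hx : |x| ≤ 1 / 2) :
    |(1 + x) * log (1 + x) + (1 - x) * log (1 - x) - x ^ 2| ≤ 5 * x ^ 4 := by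
  have hminus := abs_log_sub_add_sum_range_le (show |x| < 1 by linarith) 3
  have hplus := abs_log_sub_add_sum_range_le (x := -x) (by rw [abs_neg]; linarith) 3
  have htail : |x| ^ 4 / (1 - |x|) ≤ 2 * x ^ 4 := by
    rw [div_le_iff₀ (by linarith), pow_abs, abs_of_nonneg (by positivity)]
    nlinarith [pow_nonneg (sq_nonneg x) 2]
  simp only [Finset.sum_range_succ, Finset.sum_range_zero, sub_neg_eq_add, abs_neg] at hminus hplus
  norm_num at hminus hplus
  set rminus := x + x ^ 2 / 2 + x ^ 3 / 3 + log (1 - x)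
  set rplus := -x + x ^ 2 / 2 + (-x) ^ 3 / 3 + log (1 + x)
  have hsplit : (1 + x) * log (1 + x) + (1 - x) * log (1 - x) - x ^ 2 =
      (1 + x) * rplus + (1 - x) * rminus + 2 / 3 * x ^ 4 := by
    simp only [rplus, rminus]; ring
  have h1 : |(1 + x) * rplus| ≤ (1 + x) * (2 * x ^ 4) := by
    rw [abs_mul, abs_of_nonneg (by linarith [neg_abs_le x])]
    exact mul_le_mul_of_nonneg_left (hplus.trans htail) (by linarith [neg_abs_le x])
  have h2 : |(1 - x) * rminus| ≤ (1 - x) * (2 * x ^ 4) := by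
    rw [abs_mul, abs_of_nonneg (by linarith [le_abs_self x])]
    exact mul_le_mul_of_nonneg_left (hminus.trans htail) (by linarith [le_abs_self x])
  rw [hsplit]
  calc _ ≤ |(1 + x) * rplus| + |(1 - x) * rminus| + |2 / 3 * x ^ 4| := abs_add_three _ _ _
    _ ≤ 5 * x ^ 4 := by
      rw [abs_of_nonneg (show (0 : ℝ) ≤ 2 / 3 * x ^ 4 by positivity)]; nlinarith

lemma abs_binEnt_one_sub_div_two_sub_le {x : ℝ} (hx : |x| ≤ 1 / 2) :
    |binEnt ((1 - x) / 2) - (1 - (2 * log 2)⁻¹ * x ^ 2)| ≤ 5 * (2 * log 2)⁻¹ * x ^ 4 := by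
  have hc : 0 < (2 * log 2)⁻¹ := by have := log_pos one_lt_two; positivity
  rw [binEnt_one_sub_div_two, show ∀ S : ℝ, 1 - S / (2 * log 2) - (1 - (2 * log 2)⁻¹ * x ^ 2)
      = -((S - x ^ 2) * (2 * log 2)⁻¹) by intro S; ring, abs_neg, abs_mul, abs_of_pos hc,
    mul_right_comm]
  exact mul_le_mul_of_nonneg_right
    (abs_mul_log_one_add_add_mul_log_one_sub_sub_sq_le hx) hc.le

lemma hasSum_geometric_pgf {p z : ℝ} (h : |(1 - p) * z| < 1) :
    HasSum (fun g : ℕ => (1 - p) ^ g * p * z ^ (g + 1)) (p * z / (1 - (1 - p) * z)) := by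
  have hterm : (fun g : ℕ => (1 - p) ^ g * p * z ^ (g + 1)) = fun g => p * z * ((1 - p) * z) ^ g := by
    ext g
    rw [mul_pow, pow_succ]
    ring
  rw [hterm, div_eq_mul_inv]
  exact (hasSum_geometric_of_abs_lt_one h).mul_left (p * z)

lemma div_one_sub_one_sub_mul_le_one {p z : ℝ} (hp0 : 0 < p) (hp1 : p ≤ 1) (hz : z ≤ 1) :
    p / (1 - (1 - p) * z) ≤ 1 :=
  div_le_one_of_le₀ (by nlinarith) (by nlinarith)

lemma abs_geometric_pgf_sub_le {p z : ℝ} (hp0 : 0 < p) (hp1 : p ≤ 1) (hz : z ≤ 1) :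
    |p * z / (1 - (1 - p) * z) - p * z| ≤ z ^ 2 := by
  have hden : 0 < 1 - (1 - p) * z := by nlinarith
  have hq : 0 ≤ 1 - p := by linarith
  rw [show p * z / (1 - (1 - p) * z) - p * z = (1 - p) * z ^ 2 * (p / (1 - (1 - p) * z)) by
      rw [mul_div_assoc', eq_div_iff hden.ne', sub_mul, div_mul_cancel₀ _ hden.ne']; ring,
    abs_of_nonneg (by positivity)]
  nlinarith [mul_nonneg (mul_nonneg hq (sq_nonneg z))
    (sub_nonneg.2 (div_one_sub_one_sub_mul_le_one hp0 hp1 hz)), sq_nonneg z]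

lemma abs_tsum_geometric_mul_sub_le {f : ℝ → ℝ} {p c K r y : ℝ} (hp : p ∈ Set.Ioc 0 1)
    (hr : r ≤ 1) (hy : |y| ≤ r) (hf : ∀ x, |x| ≤ r → |f x - (1 - c * x ^ 2)| ≤ K * x ^ 4) :
    |∑' g : ℕ, (1 - p) ^ g * p * f (y ^ (g + 1)) - (1 - c * p * y ^ 2)| ≤ (|c| + K) * y ^ 4 := by
  obtain ⟨hp0, hp1⟩ := hp
  have hy2 : y ^ 2 ≤ 1 := by nlinarith [sq_abs y, abs_nonneg y]
  have hy4 : y ^ 4 ≤ 1 := by nlinarith [sq_nonneg y]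
  have hgeom {z : ℝ} (hz0 : 0 ≤ z) (hz1 : z ≤ 1) : |(1 - p) * z| < 1 := by
    rw [abs_of_nonneg (by nlinarith)]; nlinarith
  have hw : HasSum (fun g : ℕ => (1 - p) ^ g * p) 1 := by
    simpa [hp0.ne'] using hasSum_geometric_pgf (z := 1) (hgeom zero_le_one le_rfl)
  have hw2 := hasSum_geometric_pgf (hgeom (sq_nonneg y) hy2)
  have hw4 := hasSum_geometric_pgf (hgeom (by positivity) hy4)
  set d : ℕ → ℝ := fun g => (1 - p) ^ g * p * (f (y ^ (g + 1)) - (1 - c * (y ^ (g + 1)) ^ 2))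
  have hd_le (g : ℕ) : ‖d g‖ ≤ K * ((1 - p) ^ g * p * (y ^ 4) ^ (g + 1)) := by
    have hyg : |y ^ (g + 1)| ≤ r := by
      rw [abs_pow]
      exact (pow_le_of_le_one (abs_nonneg y) (hy.trans hr) (Nat.succ_ne_zero g)).trans hy
    have hwg : 0 ≤ (1 - p) ^ g * p := mul_nonneg (pow_nonneg (by linarith) g) hp0.le
    calc ‖d g‖ = (1 - p) ^ g * p * |f (y ^ (g + 1)) - (1 - c * (y ^ (g + 1)) ^ 2)| := by
          rw [Real.norm_eq_abs, abs_mul, abs_of_nonneg hwg]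
      _ ≤ (1 - p) ^ g * p * (K * (y ^ (g + 1)) ^ 4) := mul_le_mul_of_nonneg_left (hf _ hyg) hwg
      _ = _ := by ring
  have hsplit (g : ℕ) : (1 - p) ^ g * p * f (y ^ (g + 1)) =
      (1 - p) ^ g * p - c * ((1 - p) ^ g * p * (y ^ 2) ^ (g + 1)) + d g := by
    simp only [d]; ring
  have hsum : HasSum (fun g : ℕ => (1 - p) ^ g * p * f (y ^ (g + 1)))
      (1 - c * (p * y ^ 2 / (1 - (1 - p) * y ^ 2)) + ∑' g, d g) := by
    simpa only [hsplit] using (hw.sub (hw2.mul_left c)).add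
      (Summable.of_norm_bounded (hw4.mul_left K).summable hd_le).hasSum
  have hD := tsum_of_norm_bounded (hw4.mul_left K) hd_le
  rw [Real.norm_eq_abs] at hD
  have hfourth : K * (p * y ^ 4 / (1 - (1 - p) * y ^ 4)) ≤ K * y ^ 4 := by
    rw [mul_div_assoc', mul_comm p, ← mul_assoc, mul_div_assoc]
    exact mul_le_of_le_one_right ((abs_nonneg _).trans (hf y hy))
      (div_one_sub_one_sub_mul_le_one hp0 hp1 hy4)
  rw [hsum.tsum_eq]
  calc _ = |-(c * (p * y ^ 2 / (1 - (1 - p) * y ^ 2) - p * y ^ 2)) + ∑' g, d g| := by ring_nf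
    _ ≤ |c| * y ^ 4 + K * y ^ 4 := by
      refine (abs_add_le _ _).trans (add_le_add ?_ (hD.trans hfourth))
      rw [abs_neg, abs_mul]
      have hmoment := abs_geometric_pgf_sub_le hp0 hp1 hy2
      rw [← pow_mul] at hmoment
      exact mul_le_mul_of_nonneg_left hmoment (abs_nonneg c)
    _ = (|c| + K) * y ^ 4 := by ring

/-- For fixed `λ ∈ (0,1)`, `G` geometric with parameter `λ` and `q = 1/2 - ε`,
`β(ε) = E[h((1-(2ε)^G)/2)]` satisfies `β(ε) = 1 - 2·log₂e·λ·ε² + O(ε⁴)`. -/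
theorem beta_fast_transitions_asymptotics (lam : ℝ) (hlam : lam ∈ Set.Ioo (0:ℝ) 1) :
    ∃ C > (0:ℝ), ∃ e₀ > (0:ℝ), ∀ e : ℝ, 0 < e → e < e₀ → e < 1/2 →
      |(∑' g : ℕ, (1 - lam)^g * lam * binEnt ((1 - (2*e)^(g+1))/2))
        - 1 + 2 * Real.logb 2 (Real.exp 1) * lam * e^2| ≤ C * e^4 := by
  set c : ℝ := (2 * log 2)⁻¹
  have hc : 0 < c := by have := log_pos one_lt_two; positivity
  refine ⟨96 * c, by positivity, 1 / 4, by norm_num, fun e he0 he _ => ?_⟩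
  have hy : |2 * e| ≤ 1 / 2 := by rw [abs_of_pos (by linarith)]; linarith
  have hbound := abs_tsum_geometric_mul_sub_le (f := fun x => binEnt ((1 - x) / 2)) (c := c)
    (K := 5 * c) (Set.Ioo_subset_Ioc_self hlam) (by norm_num) hy
    fun _ hx => abs_binEnt_one_sub_div_two_sub_le hx
  calc _ = |∑' g : ℕ, (1 - lam) ^ g * lam * binEnt ((1 - (2 * e) ^ (g + 1)) / 2)
        - (1 - c * lam * (2 * e) ^ 2)| := by
        rw [logb, log_exp]; congr 1; ring
    _ ≤ (|c| + 5 * c) * (2 * e) ^ 4 := hbound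
    _ = 96 * c * e ^ 4 := by rw [abs_of_pos hc]; ring
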